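/- Let X be a topological space and 𝒫'(X) a set of Borel probability measures on X that is compact for the weak topology and satisfies: for every weakly convergent sequence ν_n → ν in 𝒫'(X), supp ν_n ⊆ supp ν for all large n, and supp ν is the closure of ⋃ₙ supp νₙ. Let Z ⊆ X be closed, let Σ'(Z) be the set of supports of measures in 𝒫'(X) contained in Z, and Σ'_max(Z) the maximal elements of Σ'(Z) under inclusion. If in addition distinct measures in 𝒫'(X) have distinct supports and the weak topology on 𝒫'(X) is metrizable (e.g. X is a metric space), then Σ'_max(Z) is finite. -/

import Mathlib

open MeasureTheory Filter Topology

/-- The support of a Borel measure: points all of whose open neighbourhoods have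
positive measure. -/
def mSupport {X : Type*} [TopologicalSpace X] [MeasurableSpace X]
    (mu : Measure X) : Set X :=
  {x : X | ∀ U : Set X, IsOpen U → x ∈ U → 0 < mu U}

/-! Infinitely many maximal supports would give a sequence of measures with pairwise distinct
maximal supports. A convergent subsequence has its supports eventually inside the support of
the limit, which still lies in `Z` because it is the closure of their union; by maximality all
these supports then coincide with that of the limit, a contradiction. -/

theorem IsSeqCompact.finite_setOf_maximal_image {α β : Type*} [TopologicalSpace α]
    [PartialOrder β] {K : Set α} (hK : IsSeqCompact K) (f : α → β)
    (hf : ∀ (x : ℕ → α) (a : α), (∀ n, x n ∈ K) → a ∈ K → Tendsto x atTop (𝓝 a) →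
      ∀ᶠ n in atTop, f (x n) ≤ f a) :
    {b | Maximal (· ∈ f '' K) b}.Finite := by
  by_contra hinf
  set b := (Set.not_finite.mp hinf).natEmbedding
  have hb_image (n : ℕ) : ∃ x ∈ K, f x = b n := (b n).2.1
  choose x hxK hfx using hb_image
  obtain ⟨a, haK, φ, hφ, hlim⟩ := hK hxK
  obtain ⟨N, hN⟩ := (hf _ a (fun n => hxK (φ n)) haK hlim).exists_forall_of_atTop
  have hb_eq (n : ℕ) (hn : N ≤ n) : (b (φ n) : β) = f a :=
    (b (φ n)).2.eq_of_le ⟨a, haK, rfl⟩ (hfx (φ n) ▸ hN n hn)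
  have hφ_eq : φ N = φ (N + 1) :=
    b.injective (Subtype.ext ((hb_eq N le_rfl).trans (hb_eq (N + 1) N.le_succ).symm))
  exact (hφ N.lt_succ_self).ne hφ_eq

theorem IsSeqCompact.setOf_mSupport_subset_of_closure {X : Type*} [TopologicalSpace X]
    [MeasurableSpace X] [OpensMeasurableSpace X] {P' : Set (ProbabilityMeasure X)}
    (hP' : IsSeqCompact P')
    (hclosure : ∀ (nus : ℕ → ProbabilityMeasure X) (nu : ProbabilityMeasure X),
      (∀ n, nus n ∈ P') → nu ∈ P' → Tendsto nus atTop (𝓝 nu) →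
        mSupport (nu : Measure X) = closure (⋃ n, mSupport (nus n : Measure X)))
    {Z : Set X} (hZ : IsClosed Z) :
    IsSeqCompact {nu ∈ P' | mSupport (nu : Measure X) ⊆ Z} := by
  intro nus hnus
  obtain ⟨nu, hnu, φ, hφ, hlim⟩ := hP' fun n => (hnus n).1
  refine ⟨nu, ⟨hnu, ?_⟩, φ, hφ, hlim⟩
  rw [hclosure _ nu (fun n => (hnus (φ n)).1) hnu hlim]
  exact closure_minimal (Set.iUnion_subset fun n => (hnus (φ n)).2) hZ

theorem maximal_special_supports_finite_general {X : Type*} [MetricSpace X]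
    [TopologicalSpace.SeparableSpace X] [MeasurableSpace X] [BorelSpace X]
    (P' : Set (ProbabilityMeasure X)) (hcpt : IsCompact P')
    (hconv : ∀ (nus : ℕ → ProbabilityMeasure X) (nu : ProbabilityMeasure X),
      (∀ n, nus n ∈ P') → nu ∈ P' → Tendsto nus atTop (𝓝 nu) →
      (∃ N, ∀ n ≥ N, mSupport (nus n : Measure X) ⊆ mSupport (nu : Measure X)) ∧
        mSupport (nu : Measure X) = closure (⋃ n, mSupport (nus n : Measure X)))
    (Z : Set X) (hZ : IsClosed Z) :
    {S : Set X | (∃ nu ∈ P', mSupport (nu : Measure X) = S ∧ S ⊆ Z) ∧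
      ∀ T : Set X, (∃ nu ∈ P', mSupport (nu : Measure X) = T ∧ T ⊆ Z) →
        S ⊆ T → S = T}.Finite := by
  set K := {nu ∈ P' | mSupport (nu : Measure X) ⊆ Z}
  have hK : IsSeqCompact K := IsSeqCompact.setOf_mSupport_subset_of_closure hcpt.isSeqCompact
    (fun nus nu hnus hnu hlim => (hconv nus nu hnus hnu hlim).2) hZ
  have hfinite := hK.finite_setOf_maximal_image (fun nu => mSupport (nu : Measure X))
    fun nus nu hnus hnu hlim =>
      eventually_atTop.mpr (hconv nus nu (fun n => (hnus n).1) hnu.1 hlim).1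
  refine hfinite.subset fun S ⟨⟨nu, hnu, hS, hSZ⟩, hmax⟩ => ⟨⟨nu, ⟨hnu, hS ▸ hSZ⟩, hS⟩, ?_⟩
  rintro _ ⟨mu, ⟨hmu, hmuZ⟩, rfl⟩ hle
  exact (hmax _ ⟨mu, hmu, rfl, hmuZ⟩ hle).ge

/-- If a family of probability measures is compact for the weak topology, satisfies the
support-convergence property, and measures are determined by their supports, then for any
closed `Z` the set of maximal supports contained in `Z` is finite. -/
theorem maximal_special_supports_finite {X : Type*} [MetricSpace X]
    [TopologicalSpace.SeparableSpace X] [MeasurableSpace X] [BorelSpace X]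
    (P' : Set (ProbabilityMeasure X)) (hcpt : IsCompact P')
    (hconv : ∀ (nus : ℕ → ProbabilityMeasure X) (nu : ProbabilityMeasure X),
      (∀ n, nus n ∈ P') → nu ∈ P' → Tendsto nus atTop (𝓝 nu) →
      (∃ N, ∀ n ≥ N, mSupport (nus n : Measure X) ⊆ mSupport (nu : Measure X)) ∧
        mSupport (nu : Measure X) = closure (⋃ n, mSupport (nus n : Measure X)))
    (hinj : ∀ mu ∈ P', ∀ nu ∈ P',
      mSupport (mu : Measure X) = mSupport (nu : Measure X) → mu = nu)
    (Z : Set X) (hZ : IsClosed Z) :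
    {S : Set X | (∃ nu ∈ P', mSupport (nu : Measure X) = S ∧ S ⊆ Z) ∧
      ∀ T : Set X, (∃ nu ∈ P', mSupport (nu : Measure X) = T ∧ T ⊆ Z) →
        S ⊆ T → S = T}.Finite :=
  maximal_special_supports_finite_general P' hcpt hconv Z hZ
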